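/- arXiv:1807.05471 — 2 statements merged into one kernel-verified Lean document; each statement's English description precedes it below -/
import Mathlib

section
/- Let S = k[[x_1,…,x_m]], f ∈ S, R = S/(f), and (A,B) an n×n matrix factorization of f with M = coker(A). Then for each i, the partial derivative ∂f/∂x_i stably annihilates M; explicitly, taking C = ∂B/∂x_i and D = ∂A/∂x_i yields A·(∂B/∂x_i) + (∂A/∂x_i)·B = (∂f/∂x_i)·I by the product rule applied to AB = f·I. -/
/-!
Differentiating `A B = f • 1` entrywise gives `A ∂B + ∂A B = ∂f • 1`. Modulo `f` we have
`B A = 0`, so `B` induces a map `coker A → Rⁿ`; following it by `∂A` and the projection onto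
`coker A` is multiplication by `∂f`, because `A ∂B` takes values in the image of `A`.
-/
set_option synthInstance.maxHeartbeats 1000000
set_option maxHeartbeats 1000000

universe u

/-- `r` stably annihilates `M`: multiplication by `r` on `M` factors through a
projective `R`-module. -/
def StablyAnnihilates (R : Type u) [CommRing R] (M : Type u) [AddCommGroup M] [Module R M]
    (r : R) : Prop :=
  ∃ (P : Type u) (_ : AddCommGroup P) (_ : Module R P) (_ : Module.Projective R P)
    (a : M →ₗ[R] P) (b : P →ₗ[R] M), b ∘ₗ a = r • (LinearMap.id : M →ₗ[R] M)

noncomputable section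

variable {k : Type u} [Field k] {m n : ℕ}

/-- The formal partial derivative `∂/∂x_i` on `k[[x_1, …, x_m]]`, given on coefficients by
`(∂g/∂x_i)_d = (d_i + 1) · g_{d + e_i}`. -/
def mvPderiv (i : Fin m) (g : MvPowerSeries (Fin m) k) : MvPowerSeries (Fin m) k :=
  fun d => ((d i + 1 : ℕ) : k) * MvPowerSeries.coeff (d + Finsupp.single i 1) g

/-- The hypersurface ring `R = S/(f)`. -/
abbrev HyperSurf (f : MvPowerSeries (Fin m) k) : Type u :=
  MvPowerSeries (Fin m) k ⧸ Ideal.span {f}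

/-- The cokernel of (the reduction mod `f` of) a square matrix `A` over
`S = k[[x_1, …, x_m]]`, as a module over `R = S/(f)`. -/
abbrev MFCoker (f : MvPowerSeries (Fin m) k) (A : Matrix (Fin n) (Fin n)
    (MvPowerSeries (Fin m) k)) : Type u :=
  (Fin n → HyperSurf f) ⧸
    LinearMap.range (Matrix.mulVecLin (A.map (Ideal.Quotient.mk (Ideal.span {f}))))

theorem mvPderiv_eq_pderiv (i : Fin m) : mvPderiv i = ⇑(MvPowerSeries.pderiv k i) := by
  funext g
  ext d
  show ((d i + 1 : ℕ) : k) * _ = _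
  rw [MvPowerSeries.coeff_pderiv, mul_comm]
  push_cast
  rfl

theorem stablyAnnihilates_quotient_range {R : Type u} [CommRing R] {F G : Type u}
    [AddCommGroup F] [Module R F] [Module.Projective R F] [AddCommGroup G] [Module R G]
    {a : F →ₗ[R] G} (b : G →ₗ[R] F) (c : G →ₗ[R] F) (d : F →ₗ[R] G) {r : R}
    (hba : b ∘ₗ a = 0) (hr : a ∘ₗ c + d ∘ₗ b = r • LinearMap.id) :
    StablyAnnihilates R (G ⧸ LinearMap.range a) r := by
  have hb : LinearMap.range a ≤ LinearMap.ker b := LinearMap.range_le_ker_iff.mpr hba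
  refine ⟨F, _, _, ‹_›, (LinearMap.range a).liftQ b hb, (LinearMap.range a).mkQ ∘ₗ d, ?_⟩
  refine Submodule.linearMap_qext _ (LinearMap.ext fun v => ?_)
  have hv : d (b v) = r • v - a (c v) := by
    rw [eq_sub_iff_add_eq', ← LinearMap.comp_apply, ← LinearMap.comp_apply,
      ← LinearMap.add_apply, hr]
    rfl
  simp [hv]

theorem Matrix.stablyAnnihilates_coker {R : Type u} [CommRing R] {ι : Type} [Fintype ι]
    [DecidableEq ι] {A B : Matrix ι ι R} (C D : Matrix ι ι R) {r : R} (hBA : B * A = 0)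
    (hr : A * C + D * B = r • 1) :
    StablyAnnihilates R ((ι → R) ⧸ LinearMap.range A.mulVecLin) r := by
  refine stablyAnnihilates_quotient_range B.mulVecLin C.mulVecLin D.mulVecLin ?_ ?_
  · rw [← Matrix.mulVecLin_mul, hBA]
    ext
    simp
  · rw [← Matrix.mulVecLin_mul, ← Matrix.mulVecLin_mul, ← Matrix.mulVecLin_add, hr]
    ext
    simp

section

variable {R A ι : Type*} [CommSemiring R] [CommSemiring A] [Algebra R A]

theorem Derivation.matrix_map_mul {l o : Type*} [Fintype ι] (D : Derivation R A A)
    (M : Matrix l ι A) (N : Matrix ι o A) : (M * N).map D = M * N.map D + M.map D * N := by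
  ext x y
  simp [Matrix.mul_apply, Finset.sum_add_distrib, mul_comm]

theorem Derivation.matrix_map_smul_one [DecidableEq ι] (D : Derivation R A A) (a : A) :
    (a • (1 : Matrix ι ι A)).map D = D a • 1 := by
  ext x y
  by_cases h : x = y <;> simp [h]

end

/-- Let `(A, B)` be a matrix factorization of `f ∈ S = k[[x_1, …, x_m]]` with
`M = coker A`. Differentiating `AB = f·I` gives
`A·(∂B/∂x_i) + (∂A/∂x_i)·B = (∂f/∂x_i)·I`, and the partial derivative `∂f/∂x_i`
stably annihilates `M`. -/
theorem pderiv_stablyAnnihilates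
    (f : MvPowerSeries (Fin m) k)
    (A B : Matrix (Fin n) (Fin n) (MvPowerSeries (Fin m) k))
    (hAB : A * B = f • (1 : Matrix (Fin n) (Fin n) (MvPowerSeries (Fin m) k)))
    (hBA : B * A = f • (1 : Matrix (Fin n) (Fin n) (MvPowerSeries (Fin m) k)))
    (i : Fin m) :
    A * B.map (mvPderiv i) + (A.map (mvPderiv i)) * B =
        (mvPderiv i f) • (1 : Matrix (Fin n) (Fin n) (MvPowerSeries (Fin m) k)) ∧
      StablyAnnihilates (HyperSurf f) (MFCoker f A)
        (Ideal.Quotient.mk (Ideal.span {f}) (mvPderiv i f)) := by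
  have hLeibniz : A * B.map (mvPderiv i) + A.map (mvPderiv i) * B = mvPderiv i f • 1 := by
    rw [mvPderiv_eq_pderiv, ← Derivation.matrix_map_mul, hAB, Derivation.matrix_map_smul_one]
  refine ⟨hLeibniz, ?_⟩
  set π := Ideal.Quotient.mk (Ideal.span {f})
  have hπ (g : MvPowerSeries (Fin m) k) :
      (g • (1 : Matrix (Fin n) (Fin n) (MvPowerSeries (Fin m) k))).map π = π g • 1 := by
    rw [Matrix.map_smul' _ _ _ (map_mul π), Matrix.map_one _ (map_zero π) (map_one π)]
  refine Matrix.stablyAnnihilates_coker (B := B.map π)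
    ((B.map (mvPderiv i)).map π) ((A.map (mvPderiv i)).map π) ?_ ?_
  · rw [← Matrix.map_mul, hBA, hπ, Ideal.Quotient.mk_singleton_self]
    exact zero_smul (HyperSurf f) (1 : Matrix (Fin n) (Fin n) (HyperSurf f))
  · rw [← Matrix.map_mul, ← Matrix.map_mul, ← Matrix.map_add _ (map_add π), hLeibniz, hπ]

end
end

section
/- Let R be a Gorenstein ring and M a maximal Cohen-Macaulay R-module such that Λ = End_R(M) is also maximal Cohen-Macaulay as an R-module. If r and s both stably annihilate M (i.e., multiplication by each factors through a projective on M), then rs stably annihilates Λ as an R-module: multiplication by rs on Λ factors through a projective R-module. -/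
/-!
Over a finitely generated `M`, a factorization of `r` through a projective module can be
replaced by one through a finite free module `F`, and likewise for `s` through `G`. Then
`(r * s) • f = b ∘ (a ∘ f ∘ d) ∘ c` exhibits multiplication by `r * s` on `End_R(M)` as
factoring through `Hom_R(G, F)`, which is finite free.
-/
set_option synthInstance.maxHeartbeats 1000000
set_option maxHeartbeats 1000000

open CategoryTheory

universe u

/-- A commutative Noetherian ring is Gorenstein if it has finite injective dimension over
itself; equivalently, there is `n` such that `Ext^i(M, R) = 0` for all modules `M` and
all `i ≥ n`. -/
def IsGorensteinRing (R : Type u) [CommRing R] : Prop :=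
  IsNoetherianRing R ∧
    ∃ n : ℕ, ∀ (M : ModuleCat.{u} R) (i : ℕ), n ≤ i →
      Subsingleton (((Ext R (ModuleCat.{u} R) i).obj (Opposite.op M)).obj (ModuleCat.of R R))

/-- A finitely generated module `M` over a Gorenstein ring is maximal Cohen-Macaulay if
`Ext^i(M, R) = 0` for all `i > 0`. -/
def IsMCM (R : Type u) [CommRing R] (M : Type u) [AddCommGroup M] [Module R M] : Prop :=
  Module.Finite R M ∧
    ∀ i : ℕ, 0 < i →
      Subsingleton (((Ext R (ModuleCat.{u} R) i).obj
        (Opposite.op (ModuleCat.of R M))).obj (ModuleCat.of R R))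

universe v

theorem Finsupp.exists_finset_range_le_supported {R M N α : Type*} [Semiring R]
    [AddCommMonoid M] [Module R M] [Module.Finite R M] [AddCommMonoid N] [Module R N]
    (f : M →ₗ[R] α →₀ N) : ∃ T : Finset α, LinearMap.range f ≤ Finsupp.supported N R ↑T := by
  classical
  obtain ⟨S, hS⟩ := Module.Finite.fg_top (R := R) (M := M)
  refine ⟨S.biUnion fun m ↦ (f m).support, ?_⟩
  rw [LinearMap.range_eq_map, ← hS, Submodule.map_span]
  exact (Finsupp.span_le_supported_biUnion_support R _).trans (Finsupp.supported_mono (by simp))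

theorem Module.Projective.exists_finite_finsupp_comp_eq {R M N : Type*} {P : Type v} [Semiring R]
    [AddCommMonoid M] [Module R M] [Module.Finite R M] [AddCommMonoid P] [Module R P]
    [Module.Projective R P] [AddCommMonoid N] [Module R N] (a : M →ₗ[R] P) (b : P →ₗ[R] N) :
    ∃ (ι : Type v) (_ : Finite ι) (a' : M →ₗ[R] ι →₀ R) (b' : (ι →₀ R) →ₗ[R] N),
      b' ∘ₗ a' = b ∘ₗ a := by
  -- `P` is a retract of `P →₀ R`, and the image of `M` there has finite support.
  obtain ⟨σ, hσ⟩ := Module.projective_def.mp ‹Module.Projective R P›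
  obtain ⟨T, hT⟩ := Finsupp.exists_finset_range_le_supported (σ ∘ₗ a)
  let e := Finsupp.supportedEquivFinsupp (M := R) (R := R) (T : Set P)
  refine ⟨T, inferInstance, e ∘ₗ (σ ∘ₗ a).codRestrict _ fun m ↦ hT ⟨m, rfl⟩,
    b ∘ₗ Finsupp.linearCombination R id ∘ₗ Submodule.subtype _ ∘ₗ e.symm.toLinearMap, ?_⟩
  ext m
  simpa using congr_arg b (hσ (a m))

theorem LinearMap.mul_smul_id_eq_comp_through_hom {R M N F G : Type*} [CommSemiring R]
    [AddCommMonoid M] [Module R M] [AddCommMonoid N] [Module R N]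
    [AddCommMonoid F] [Module R F] [AddCommMonoid G] [Module R G] {r s : R}
    {a : N →ₗ[R] F} {b : F →ₗ[R] N} (hba : b ∘ₗ a = r • LinearMap.id)
    {c : M →ₗ[R] G} {d : G →ₗ[R] M} (hdc : d ∘ₗ c = s • LinearMap.id) :
    (lcomp R N c ∘ₗ llcomp R G F N b) ∘ₗ (lcomp R F d ∘ₗ llcomp R M N F a) =
      (r * s) • LinearMap.id := by
  ext f m
  have hd : ∀ x, d (c x) = s • x := fun x ↦ congr($hdc x)
  have hb : ∀ y, b (a y) = r • y := fun y ↦ congr($hba y)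
  simp [hb, hd, mul_smul, smul_comm s r]

theorem mul_stablyAnnihilates_end_general (R : Type u) [CommRing R]
    (M : Type u) [AddCommGroup M] [Module R M] (hM : IsMCM R M) (r s : R)
    (hr : StablyAnnihilates R M r) (hs : StablyAnnihilates R M s) :
    StablyAnnihilates R (Module.End R M) (r * s) := by
  have : Module.Finite R M := hM.1
  obtain ⟨P, _, _, _, a₀, b₀, hba₀⟩ := hr
  obtain ⟨Q, _, _, _, c₀, d₀, hdc₀⟩ := hs
  obtain ⟨ι, _, a, b, hba⟩ := Module.Projective.exists_finite_finsupp_comp_eq a₀ b₀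
  obtain ⟨κ, _, c, d, hdc⟩ := Module.Projective.exists_finite_finsupp_comp_eq c₀ d₀
  exact ⟨(κ →₀ R) →ₗ[R] ι →₀ R, inferInstance, inferInstance, inferInstance, _, _,
    LinearMap.mul_smul_id_eq_comp_through_hom (hba.trans hba₀) (hdc.trans hdc₀)⟩

/-- Let `R` be Gorenstein and `M` maximal Cohen-Macaulay such that `Λ = End_R(M)` is
also maximal Cohen-Macaulay as an `R`-module. If `r` and `s` both stably annihilate `M`
(multiplication by each factors through a projective on `M`), then `r * s` stably
annihilates `Λ`: multiplication by `r * s` on `Λ` factors through a projective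
`R`-module. Hence `(sann M)² ⊆ sann Λ`. -/
theorem mul_stablyAnnihilates_end (R : Type u) [CommRing R] (hR : IsGorensteinRing R)
    (M : Type u) [AddCommGroup M] [Module R M] (hM : IsMCM R M)
    (hΛ : IsMCM R (Module.End R M)) (r s : R)
    (hr : StablyAnnihilates R M r) (hs : StablyAnnihilates R M s) :
    StablyAnnihilates R (Module.End R M) (r * s) :=
  mul_stablyAnnihilates_end_general R M hM r s hr hs
end
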